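/- If g ∈ ℓ²(V) is a nonzero eigenfunction of the combinatorial Laplacian of the Kagome lattice, Δ_comb g = μ g, then μ = 3/2. -/

import Mathlib

/-
Restricted to the three sublattices of the Kagome lattice, each indexed by `ℤ²`, an eigenfunction
becomes three functions `A, B, C`; put `κ = 4 - 4μ`. Their sums `P` over the up-triangles and `Q`
over the down-triangles satisfy `(κ - 1) P = Q + Q(· + e₁) + Q(· + e₂)` and
`(κ - 1) Q = P + P(· - e₁) + P(· - e₂)`, so both are `ℓ²` eigenfunctions of the adjacency operator
of the triangular lattice. No nonzero finitely supported convolution operator on `ℓ²(ℤ²)` has a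
kernel: after a Fourier transform in the second variable, for almost every frequency the columns
solve a linear recurrence, and a Fourier transform in the first variable multiplies them by a
nonzero trigonometric polynomial, which vanishes at finitely many points only. Hence `P = Q = 0`,
and then `(κ + 2) A = (κ + 2) B = (κ + 2) C = 0`, which forces `κ = -2`, i.e. `μ = 3/2`.
-/

open Complex

/-- `w₁ = 1`. -/
noncomputable def kagomeW₁ : ℂ := 1

/-- `w₂ = e^{iπ/3}`. -/
noncomputable def kagomeW₂ : ℂ := Complex.exp (Real.pi * Complex.I / 3)

/-- The vertex set of the Kagome lattice:
`V = (2ℤw₁+2ℤw₂) ∪ (w₁+2ℤw₁+2ℤw₂) ∪ (w₂+2ℤw₁+2ℤw₂) ⊂ ℂ`. -/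
def kagomeV : Set ℂ :=
  {v | ∃ m n : ℤ,
      v = 2 * (m : ℂ) * kagomeW₁ + 2 * (n : ℂ) * kagomeW₂ ∨
      v = kagomeW₁ + 2 * (m : ℂ) * kagomeW₁ + 2 * (n : ℂ) * kagomeW₂ ∨
      v = kagomeW₂ + 2 * (m : ℂ) * kagomeW₁ + 2 * (n : ℂ) * kagomeW₂}

/-- Adjacency in the Kagome lattice: two vertices at Euclidean distance `1`. -/
def kagomeAdj (v w : ℂ) : Prop :=
  v ∈ kagomeV ∧ w ∈ kagomeV ∧ ‖v - w‖ = 1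

/-- The combinatorial (normalized) Laplacian of the Kagome lattice:
`(Δ F)(v) = (1/deg v) ∑_{w∼v} (F(v) - F(w))`, where every vertex has degree `4`.
(The sum over the finitely many neighbours is expressed as a `tsum`.) -/
noncomputable def kagomeLap (F : ℂ → ℝ) (v : ℂ) : ℝ :=
  (1 / 4) * ∑' w : {w : ℂ // kagomeAdj v w}, (F v - F (w : ℂ))

/-- `w₀` is the centre of a hexagon of the Kagome lattice: its six prospective vertices
`w₀ + e^{kπi/3}`, `k = 0,…,5`, all belong to the lattice. -/
def IsHexCenter (w₀ : ℂ) : Prop :=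
  ∀ k : Fin 6, w₀ + Complex.exp (((k : ℕ) : ℂ) * Real.pi * Complex.I / 3) ∈ kagomeV

/-- The alternating `±1` function supported on the vertices of the hexagon with centre `w₀`:
`F_H(v) = (-1)^k` if `v = w₀ + e^{kπi/3}` and `0` otherwise. -/
noncomputable def hexFun (w₀ : ℂ) : ℂ → ℝ := fun v =>
  if h : ∃ k : Fin 6, v = w₀ + Complex.exp (((k : ℕ) : ℂ) * Real.pi * Complex.I / 3) then
    (-1 : ℝ) ^ ((h.choose : ℕ)) else 0

open MeasureTheory AddCircle

theorem ae_summable_of_summable_integral {α ι : Type*} [MeasurableSpace α] {μ : Measure α}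
    [Countable ι] {f : ι → α → ℝ} (hf : ∀ i x, 0 ≤ f i x) (hfi : ∀ i, Integrable (f i) μ)
    (hs : Summable fun i => ∫ x, f i x ∂μ) : ∀ᵐ x ∂μ, Summable fun i => f i x := by
  have hmeas : ∀ i, AEMeasurable (fun x => ENNReal.ofReal (f i x)) μ :=
    fun i => (hfi i).aemeasurable.ennreal_ofReal
  have hfin : ∫⁻ x, ∑' i, ENNReal.ofReal (f i x) ∂μ ≠ ⊤ := by
    rw [lintegral_tsum hmeas]
    simp_rw [← ofReal_integral_eq_lintegral_ofReal (hfi _) (.of_forall (hf _))]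
    exact hs.tsum_ofReal_ne_top
  filter_upwards [ae_lt_top' (AEMeasurable.tsum hmeas) hfin] with x hx
  simpa [ENNReal.toReal_ofReal (hf _ x)] using ENNReal.summable_toReal hx.ne

theorem Summable.sq_add {ι : Type*} {f g : ι → ℝ} (hf : Summable fun i => f i ^ 2)
    (hg : Summable fun i => g i ^ 2) : Summable fun i => (f i + g i) ^ 2 :=
  ((hf.add hg).mul_left 2).of_nonneg_of_le (fun _ => sq_nonneg _) fun i => by
    nlinarith [sq_nonneg (f i - g i)]

theorem Summable.sq_comp_sub {G : Type*} [AddGroup G] {f : G → ℝ} (hf : Summable fun p => f p ^ 2)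
    (d : G) : Summable fun p => f (p - d) ^ 2 :=
  (Equiv.subRight d).summable_iff.2 hf

section Fourier

variable {T : ℝ} [hT : Fact (0 < T)]

instance : Nontrivial (AddCircle T) :=
  ⟨⟨((T / 2 : ℝ) : AddCircle T), 0, fun h => by
    have := addOrderOf_period_div (p := T) (n := 2) two_pos
    rw [Nat.cast_ofNat, h, addOrderOf_zero] at this
    norm_num at this⟩⟩

theorem memLp_fourier_mul {F : AddCircle T → ℂ} (hF : MemLp F 2 haarAddCircle)
    (s : ℤ) : MemLp (fun x => fourier s x * F x) 2 haarAddCircle :=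
  hF.of_le ((map_continuous (fourier s)).aestronglyMeasurable.mul hF.1) <|
    .of_forall fun x => by simp [fourier_apply, Circle.norm_coe]

theorem fourierCoeff_fourier_mul (F : AddCircle T → ℂ) (s n : ℤ) :
    fourierCoeff (fun x => fourier s x * F x) n = fourierCoeff F (n - s) := by
  simp only [fourierCoeff, smul_eq_mul, ← mul_assoc, ← fourier_add, neg_sub, neg_add_eq_sub]

theorem ae_eq_zero_of_fourierCoeff_eq_zero {F : AddCircle T → ℂ} (hF : MemLp F 2 haarAddCircle)
    (h : ∀ n, fourierCoeff F n = 0) : F =ᵐ[haarAddCircle] 0 := by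
  have hrepr : fourierBasis.repr (hF.toLp F) = 0 := by
    ext n
    simp [fourierBasis_repr, fourierCoeff_congr_ae hF.coeFn_toLp, h]
  rw [LinearIsometryEquiv.map_eq_zero_iff, Lp.eq_zero_iff_ae_eq_zero] at hrepr
  exact hF.coeFn_toLp.symm.trans hrepr

theorem exists_memLp_fourierCoeff_eq {h : ℤ → ℂ} (hh : Summable fun n => ‖h n‖ ^ 2) :
    ∃ F : AddCircle T → ℂ, MemLp F 2 haarAddCircle ∧ fourierCoeff F = h := by
  have hmem : Memℓp h 2 := memℓp_gen (by simpa using hh)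
  refine ⟨fourierBasis.repr.symm ⟨h, hmem⟩, Lp.memLp _, funext fun n => ?_⟩
  rw [← fourierBasis_repr, LinearIsometryEquiv.apply_symm_apply]

theorem integral_norm_sq_eq_tsum_fourierCoeff {F : AddCircle T → ℂ} (hF : MemLp F 2 haarAddCircle) :
    ∫ x, ‖F x‖ ^ 2 ∂haarAddCircle = ∑' n, ‖fourierCoeff F n‖ ^ 2 := by
  rw [← fourierCoeff_congr_ae hF.coeFn_toLp, tsum_sq_fourierCoeff]
  exact integral_congr_ae (hF.coeFn_toLp.mono fun x hx => by simp [hx])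

theorem ae_sum_mul_fourier_mul_eq_zero {ι : Type*} (S : Finset ι) (c : ι → ℂ) (s : ι → ℤ)
    {F : ι → AddCircle T → ℂ} (hF : ∀ i, MemLp (F i) 2 haarAddCircle)
    (h : ∀ n, ∑ i ∈ S, c i * fourierCoeff (F i) (n - s i) = 0) :
    ∀ᵐ x ∂haarAddCircle, ∑ i ∈ S, c i * (fourier (s i) x * F i x) = 0 := by
  have hmem : ∀ i ∈ S, MemLp (fun x => c i * (fourier (s i) x * F i x)) 2 haarAddCircle :=
    fun i _ => (memLp_fourier_mul (hF i) (s i)).const_mul (c i)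
  refine ae_eq_zero_of_fourierCoeff_eq_zero (memLp_finsetSum S hmem) fun n => ?_
  have hsum : (fun x => ∑ i ∈ S, c i * (fourier (s i) x * F i x)) =
      ∑ i ∈ S, fun x => c i * (fourier (s i) x * F i x) := by
    ext x; simp
  rw [hsum, fourierCoeff.sum S _ fun i hi => (hmem i hi).integrable one_le_two, Finset.sum_apply]
  simpa only [fourierCoeff.const_mul, fourierCoeff_fourier_mul] using h n

open Polynomial in
theorem ae_sum_mul_fourier_ne_zero {ι : Type*} (S : Finset ι) (c : ι → ℂ) {s : ι → ℤ}
    (hs : Set.InjOn s S) (hc : ∃ i ∈ S, c i ≠ 0) :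
    ∀ᵐ x ∂haarAddCircle (T := T), ∑ i ∈ S, c i * fourier (s i) x ≠ 0 := by
  obtain ⟨i₀, hi₀, hci₀⟩ := hc
  obtain ⟨B, hB⟩ : ∃ B, ∀ i ∈ S, B ≤ s i :=
    ⟨(S.image s).min' ⟨_, Finset.mem_image_of_mem s hi₀⟩,
      fun i hi => Finset.min'_le _ _ (Finset.mem_image_of_mem s hi)⟩
  set Q : ℂ[X] := ∑ i ∈ S, C (c i) * X ^ (s i - B).toNat
  have hQ : Q ≠ 0 := by
    intro hQ
    apply hci₀
    have := congrArg (coeff · (s i₀ - B).toNat) hQ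
    simp only [Q, finsetSum_coeff, coeff_C_mul_X_pow, coeff_zero] at this
    rwa [Finset.sum_eq_single_of_mem i₀ hi₀ fun i hi hne => if_neg fun h =>
      hne (hs hi hi₀ (by have := hB i hi; have := hB i₀ hi₀; omega)), if_pos rfl] at this
  -- On the unit circle, the trigonometric polynomial is `z ^ B * Q z`.
  have hfactor : ∀ x : AddCircle T, ∑ i ∈ S, c i * fourier (s i) x =
      (toCircle x : ℂ) ^ B * Q.eval (toCircle x : ℂ) := by
    intro x
    have hz : (toCircle x : ℂ) ≠ 0 := Circle.coe_ne_zero _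
    simp only [Q, eval_finsetSum, eval_mul, eval_C, eval_pow, eval_X, Finset.mul_sum,
      fourier_apply, toCircle_zsmul, Circle.coe_zpow]
    refine Finset.sum_congr rfl fun i hi => ?_
    rw [mul_left_comm, ← zpow_natCast, ← zpow_add₀ hz, Int.toNat_of_nonneg (sub_nonneg.2 (hB i hi)),
      add_sub_cancel]
  have hfin : {x : AddCircle T | Q.eval (toCircle x : ℂ) = 0}.Finite :=
    (finite_setOfPred_isRoot hQ).preimage
      (Subtype.coe_injective.comp (injective_toCircle hT.out.ne')).injOn
  refine ae_iff.2 (measure_mono_null (fun x hx => ?_) (hfin.measure_zero _))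
  rw [Set.mem_ofPred_eq, not_not, hfactor] at hx
  exact (mul_eq_zero.1 hx).resolve_left (zpow_ne_zero _ (Circle.coe_ne_zero _))

end Fourier

theorem eq_zero_of_summable_sq_of_conv_eq_zero (S : Finset ℤ) (c : ℤ → ℂ)
    (hc : ∃ t ∈ S, c t ≠ 0) {h : ℤ → ℂ} (hh : Summable fun n => ‖h n‖ ^ 2)
    (heq : ∀ n, ∑ t ∈ S, c t * h (n - t) = 0) : h = 0 := by
  obtain ⟨F, hF, rfl⟩ := exists_memLp_fourierCoeff_eq (T := 1) hh
  have hconv := ae_sum_mul_fourier_mul_eq_zero S c id (fun _ => hF) heq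
  have hF0 : F =ᵐ[haarAddCircle] 0 := by
    filter_upwards [hconv, ae_sum_mul_fourier_ne_zero S c (Set.injOn_id _) hc] with x hx hsym
    simp only [id, ← mul_assoc, ← Finset.sum_mul] at hx
    exact (mul_eq_zero.1 hx).resolve_left hsym
  rw [fourierCoeff_congr_ae hF0]
  ext n
  simp [fourierCoeff]

theorem eq_zero_of_summable_sq_of_conv_eq_zero₂ (S : Finset (ℤ × ℤ)) (a : ℤ × ℤ → ℂ)
    (ha : ∃ q ∈ S, a q ≠ 0) {H : ℤ × ℤ → ℂ} (hH : Summable fun p => ‖H p‖ ^ 2)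
    (heq : ∀ p, ∑ q ∈ S, a q * H (p - q) = 0) : H = 0 := by
  classical
  choose F hF hFH using fun v =>
    exists_memLp_fourierCoeff_eq (T := 1) (hH.comp_injective (Prod.mk_right_injective v))
  have hcol : ∀ᵐ x ∂haarAddCircle, Summable fun v => ‖F v x‖ ^ 2 := by
    refine ae_summable_of_summable_integral (fun _ _ => by positivity)
      (fun v => (hF v).integrable_norm_pow two_ne_zero) ?_
    simp_rw [integral_norm_sq_eq_tsum_fourierCoeff (hF _), hFH]
    exact (summable_prod_of_nonneg fun _ => by positivity).1 hH |>.2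
  have hconv : ∀ᵐ x ∂haarAddCircle, ∀ v, ∑ q ∈ S, a q * (fourier q.2 x * F (v - q.1) x) = 0 :=
    ae_all_iff.2 fun v => ae_sum_mul_fourier_mul_eq_zero S a Prod.snd (fun _ => hF _)
      fun n => by simpa [hFH, Prod.sub_def] using heq (v, n)
  obtain ⟨q₀, hq₀, haq₀⟩ := ha
  have hsym : ∀ᵐ x ∂haarAddCircle (T := 1), ∑ q ∈ S with q.1 = q₀.1, a q * fourier q.2 x ≠ 0 :=
    ae_sum_mul_fourier_ne_zero _ a (fun q hq q' hq' h => Prod.ext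
      ((Finset.mem_filter.1 hq).2.trans (Finset.mem_filter.1 hq').2.symm) h)
      ⟨q₀, Finset.mem_filter.2 ⟨hq₀, rfl⟩, haq₀⟩
  have hF0 : ∀ᵐ x ∂haarAddCircle, ∀ v, F v x = 0 := by
    filter_upwards [hcol, hconv, hsym] with x hx hconv hsym
    have hrec : ∀ n, ∑ t ∈ S.image Prod.fst,
        (∑ q ∈ S with q.1 = t, a q * fourier q.2 x) * F (n - t) x = 0 := fun n => by
      rw [← hconv n,
        ← Finset.sum_fiberwise_of_maps_to fun q hq => Finset.mem_image_of_mem Prod.fst hq]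
      refine Finset.sum_congr rfl fun t _ => ?_
      rw [Finset.sum_mul]
      exact Finset.sum_congr rfl fun q hq => by rw [(Finset.mem_filter.1 hq).2, mul_assoc]
    exact congrFun (eq_zero_of_summable_sq_of_conv_eq_zero _ _
      ⟨q₀.1, Finset.mem_image_of_mem _ hq₀, hsym⟩ hx hrec)
  ext ⟨v, u⟩
  rw [← congrFun (hFH v) u, fourierCoeff_congr_ae (hF0.mono fun x hx => hx v)]
  simp [fourierCoeff]

theorem eq_zero_of_triangular_eigen {F : ℤ × ℤ → ℝ} (hF : Summable fun p => F p ^ 2) (c : ℝ)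
    (h : ∀ m n, c * F (m, n) + F (m + 1, n) + F (m - 1, n) + F (m, n + 1) + F (m, n - 1) +
      F (m + 1, n - 1) + F (m - 1, n + 1) = 0) : F = 0 := by
  have hH := eq_zero_of_summable_sq_of_conv_eq_zero₂
    {(0, 0), (1, 0), (-1, 0), (0, 1), (0, -1), (1, -1), (-1, 1)}
    (fun q => if q = 0 then (c : ℂ) else 1) ⟨(1, 0), by simp, by simp⟩
    (H := fun p => (F p : ℂ)) (by simpa using hF) fun ⟨m, n⟩ => by
      have := congrArg ((↑) : ℝ → ℂ) (h m n)
      push_cast at this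
      simp only [Int.reduceNeg, Prod.ext_iff, Prod.fst_zero, Prod.snd_zero, ite_mul, one_mul,
        Finset.mem_insert, zero_ne_one, and_true, zero_eq_neg, one_ne_zero, and_false, and_self,
        Finset.mem_singleton, or_self, not_false_eq_true, Finset.sum_insert, ↓reduceIte,
        Prod.mk_sub_mk, sub_zero, reduceCtorEq, neg_eq_zero, sub_neg_eq_add, Finset.sum_singleton]
      linear_combination this
  ext p
  simpa using congrFun hH p

noncomputable def kagomePt (p : ℤ × ℤ) : ℂ := p.1 + p.2 * kagomeW₂

theorem kagomeW₂_re : kagomeW₂.re = 1 / 2 := by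
  rw [kagomeW₂, show (Real.pi : ℂ) * I / 3 = ((Real.pi / 3 : ℝ) : ℂ) * I by push_cast; ring,
    exp_ofReal_mul_I_re, Real.cos_pi_div_three]

theorem kagomeW₂_im : kagomeW₂.im = √3 / 2 := by
  rw [kagomeW₂, show (Real.pi : ℂ) * I / 3 = ((Real.pi / 3 : ℝ) : ℂ) * I by push_cast; ring,
    exp_ofReal_mul_I_im, Real.sin_pi_div_three]

theorem normSq_kagomePt (p : ℤ × ℤ) :
    normSq (kagomePt p) = p.1 ^ 2 + p.1 * p.2 + p.2 ^ 2 := by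
  have h3 : √3 ^ 2 = 3 := Real.sq_sqrt (by norm_num)
  simp only [kagomePt, normSq_apply, add_re, add_im, mul_re, mul_im, intCast_re, intCast_im,
    kagomeW₂_re, kagomeW₂_im]
  linear_combination (p.2 : ℝ) ^ 2 / 4 * h3

theorem kagomePt_sub (p q : ℤ × ℤ) : kagomePt p - kagomePt q = kagomePt (p - q) := by
  simp only [kagomePt, Prod.fst_sub, Prod.snd_sub]
  push_cast
  ring

theorem kagomePt_eq_zero {d : ℤ × ℤ} (h : kagomePt d = 0) : d = 0 := by
  have h0 := congrArg normSq h
  rw [normSq_kagomePt, map_zero] at h0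
  have h0' : d.1 ^ 2 + d.1 * d.2 + d.2 ^ 2 = 0 := by exact_mod_cast h0
  have h2 : d.2 = 0 := by nlinarith [sq_nonneg (2 * d.1 + d.2), sq_nonneg d.2]
  exact Prod.ext (by simpa [h2] using h0') h2

theorem kagomePt_injective : Function.Injective kagomePt := fun p q h =>
  sub_eq_zero.1 (kagomePt_eq_zero (by rw [← kagomePt_sub, h, sub_self]))

theorem sq_add_mul_add_sq_eq_one_iff (x y : ℤ) :
    x ^ 2 + x * y + y ^ 2 = 1 ↔ x = 1 ∧ y = 0 ∨ x = -1 ∧ y = 0 ∨ x = 0 ∧ y = 1 ∨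
      x = 0 ∧ y = -1 ∨ x = 1 ∧ y = -1 ∨ x = -1 ∧ y = 1 := by
  constructor
  · intro h
    obtain ⟨hx₁, hx₂⟩ : -1 ≤ x ∧ x ≤ 1 := by constructor <;> nlinarith [sq_nonneg (x + 2 * y)]
    obtain ⟨hy₁, hy₂⟩ : -1 ≤ y ∧ y ≤ 1 := by constructor <;> nlinarith [sq_nonneg (2 * x + y)]
    interval_cases x <;> interval_cases y <;> simp_all
  · rintro (⟨rfl, rfl⟩ | ⟨rfl, rfl⟩ | ⟨rfl, rfl⟩ | ⟨rfl, rfl⟩ | ⟨rfl, rfl⟩ | ⟨rfl, rfl⟩) <;>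
      norm_num

theorem norm_kagomePt_eq_one_iff (d : ℤ × ℤ) :
    ‖kagomePt d‖ = 1 ↔ d.1 ^ 2 + d.1 * d.2 + d.2 ^ 2 = 1 := by
  rw [← pow_eq_one_iff_of_nonneg (norm_nonneg _) two_ne_zero, ← normSq_eq_norm_sq, normSq_kagomePt]
  exact_mod_cast Iff.rfl

theorem mem_kagomeV_iff {v : ℂ} : v ∈ kagomeV ↔ ∃ p : ℤ × ℤ, v = kagomePt (2 * p.1, 2 * p.2) ∨
    v = kagomePt (2 * p.1 + 1, 2 * p.2) ∨ v = kagomePt (2 * p.1, 2 * p.2 + 1) := by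
  have hpt : ∀ a b : ℤ, kagomePt (a, b) = a * kagomeW₁ + b * kagomeW₂ := fun a b => by
    simp [kagomePt, kagomeW₁]
  simp only [kagomeV, Set.mem_ofPred_eq, Prod.exists, hpt]
  push_cast
  refine exists₂_congr fun m n => ?_
  ring_nf

theorem kagomePt_mem_kagomeV_iff (q : ℤ × ℤ) :
    kagomePt q ∈ kagomeV ↔ q.1 % 2 = 0 ∨ q.2 % 2 = 0 := by
  simp only [mem_kagomeV_iff, kagomePt_injective.eq_iff, Prod.ext_iff]
  constructor
  · rintro ⟨p, h⟩
    omega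
  · intro h
    exact ⟨(q.1 / 2, q.2 / 2), by omega⟩

theorem kagomeLap_kagomePt (F : ℂ → ℝ) {p : ℤ × ℤ} (hp : kagomePt p ∈ kagomeV)
    (D : Finset (ℤ × ℤ))
    (hD : ∀ q, kagomePt q ∈ kagomeV ∧ ‖kagomePt (p - q)‖ = 1 ↔ q ∈ D) :
    kagomeLap F (kagomePt p) = 1 / 4 * ∑ q ∈ D, (F (kagomePt p) - F (kagomePt q)) := by
  classical
  have hadj : ∀ w, kagomeAdj (kagomePt p) w ↔ w ∈ D.image kagomePt := by
    intro w
    simp only [kagomeAdj, hp, true_and, Finset.mem_image]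
    constructor
    · rintro ⟨hw, hdist⟩
      obtain ⟨q, rfl⟩ : ∃ q, kagomePt q = w := by
        obtain ⟨r, h | h | h⟩ := mem_kagomeV_iff.1 hw <;> exact ⟨_, h.symm⟩
      exact ⟨q, (hD q).1 ⟨hw, by rwa [← kagomePt_sub]⟩, rfl⟩
    · rintro ⟨q, hq, rfl⟩
      have := (hD q).2 hq
      rwa [kagomePt_sub]
  rw [kagomeLap, ← Finset.sum_image (f := fun w => F (kagomePt p) - F w) kagomePt_injective.injOn,
    ← Finset.tsum_subtype,
    ← Equiv.tsum_eq (Equiv.subtypeEquivRight hadj)]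
  rfl

theorem kagomeLap_kagomePt_of_neighbours (F : ℂ → ℝ) {p q₁ q₂ q₃ q₄ : ℤ × ℤ}
    (hp : kagomePt p ∈ kagomeV) (hq : [q₁, q₂, q₃, q₄].Nodup)
    (hD : ∀ q, kagomePt q ∈ kagomeV ∧ ‖kagomePt (p - q)‖ = 1 ↔ q = q₁ ∨ q = q₂ ∨ q = q₃ ∨ q = q₄) :
    kagomeLap F (kagomePt p) = F (kagomePt p) - (F (kagomePt q₁) + F (kagomePt q₂) +
      F (kagomePt q₃) + F (kagomePt q₄)) / 4 := by
  classical
  rw [kagomeLap_kagomePt F hp [q₁, q₂, q₃, q₄].toFinset fun q => by simp [hD],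
    List.sum_toFinset _ hq]
  simp only [List.map_cons, List.map_nil, List.sum_cons, List.sum_nil]
  ring

theorem kagomeLap_kagomePt_even_even (F : ℂ → ℝ) (m n : ℤ) :
    kagomeLap F (kagomePt (2 * m, 2 * n)) = F (kagomePt (2 * m, 2 * n)) -
      (F (kagomePt (2 * m + 1, 2 * n)) + F (kagomePt (2 * (m - 1) + 1, 2 * n)) +
        F (kagomePt (2 * m, 2 * n + 1)) + F (kagomePt (2 * m, 2 * (n - 1) + 1))) / 4 := by
  refine kagomeLap_kagomePt_of_neighbours F ((kagomePt_mem_kagomeV_iff _).2 (by omega)) ?_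
    fun q => ?_
  · simp only [List.nodup_cons, List.mem_cons, List.not_mem_nil, List.nodup_nil, Prod.ext_iff,
      or_false, and_true, true_and, not_false_eq_true]
    omega
  · simp only [kagomePt_mem_kagomeV_iff, norm_kagomePt_eq_one_iff, sq_add_mul_add_sq_eq_one_iff,
      Prod.fst_sub, Prod.snd_sub, Prod.ext_iff]
    omega

theorem kagomeLap_kagomePt_odd_even (F : ℂ → ℝ) (m n : ℤ) :
    kagomeLap F (kagomePt (2 * m + 1, 2 * n)) = F (kagomePt (2 * m + 1, 2 * n)) -
      (F (kagomePt (2 * m, 2 * n)) + F (kagomePt (2 * (m + 1), 2 * n)) +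
        F (kagomePt (2 * m, 2 * n + 1)) + F (kagomePt (2 * (m + 1), 2 * (n - 1) + 1))) / 4 := by
  refine kagomeLap_kagomePt_of_neighbours F ((kagomePt_mem_kagomeV_iff _).2 (by omega)) ?_
    fun q => ?_
  · simp only [List.nodup_cons, List.mem_cons, List.not_mem_nil, List.nodup_nil, Prod.ext_iff,
      or_false, and_true, true_and, not_false_eq_true]
    omega
  · simp only [kagomePt_mem_kagomeV_iff, norm_kagomePt_eq_one_iff, sq_add_mul_add_sq_eq_one_iff,
      Prod.fst_sub, Prod.snd_sub, Prod.ext_iff]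
    omega

theorem kagomeLap_kagomePt_even_odd (F : ℂ → ℝ) (m n : ℤ) :
    kagomeLap F (kagomePt (2 * m, 2 * n + 1)) = F (kagomePt (2 * m, 2 * n + 1)) -
      (F (kagomePt (2 * m, 2 * n)) + F (kagomePt (2 * m, 2 * (n + 1))) +
        F (kagomePt (2 * m + 1, 2 * n)) + F (kagomePt (2 * (m - 1) + 1, 2 * (n + 1)))) / 4 := by
  refine kagomeLap_kagomePt_of_neighbours F ((kagomePt_mem_kagomeV_iff _).2 (by omega)) ?_
    fun q => ?_
  · simp only [List.nodup_cons, List.mem_cons, List.not_mem_nil, List.nodup_nil, Prod.ext_iff,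
      or_false, and_true, true_and, not_false_eq_true]
    omega
  · simp only [kagomePt_mem_kagomeV_iff, norm_kagomePt_eq_one_iff, sq_add_mul_add_sq_eq_one_iff,
      Prod.fst_sub, Prod.snd_sub, Prod.ext_iff]
    omega

theorem eq_zero_of_kagome_eigen {A B C : ℤ × ℤ → ℝ} {κ : ℝ} (hκ : κ + 2 ≠ 0)
    (hA : Summable fun p => A p ^ 2) (hB : Summable fun p => B p ^ 2)
    (hC : Summable fun p => C p ^ 2)
    (eqA : ∀ m n, B (m, n) + B (m - 1, n) + C (m, n) + C (m, n - 1) = κ * A (m, n))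
    (eqB : ∀ m n, A (m, n) + A (m + 1, n) + C (m, n) + C (m + 1, n - 1) = κ * B (m, n))
    (eqC : ∀ m n, A (m, n) + A (m, n + 1) + B (m, n) + B (m - 1, n + 1) = κ * C (m, n)) :
    A = 0 ∧ B = 0 ∧ C = 0 := by
  obtain ⟨P, hP⟩ : ∃ P : ℤ × ℤ → ℝ, ∀ p, P p = A p + B p + C p := ⟨_, fun _ => rfl⟩
  obtain ⟨Q, hQ⟩ : ∃ Q : ℤ × ℤ → ℝ, ∀ m n, Q (m, n) = A (m, n) + B (m - 1, n) + C (m, n - 1) :=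
    ⟨fun p => A p + B (p - (1, 0)) + C (p - (0, 1)), fun _ _ => by simp⟩
  have hPs : Summable fun p => P p ^ 2 := by
    simpa only [hP] using (hA.sq_add hB).sq_add hC
  have hQs : Summable fun p => Q p ^ 2 := by
    refine ((hA.sq_add (hB.sq_comp_sub (1, 0))).sq_add (hC.sq_comp_sub (0, 1))).congr
      fun ⟨m, n⟩ => ?_
    rw [hQ, Prod.mk_sub_mk, Prod.mk_sub_mk, sub_zero, sub_zero]
  have hPQ : ∀ m n, (κ - 1) * P (m, n) = Q (m, n) + Q (m + 1, n) + Q (m, n + 1) := by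
    intro m n
    simp only [hP, hQ, add_sub_cancel_right]
    linear_combination -eqA m n - eqB m n - eqC m n
  have hQP : ∀ m n, (κ - 1) * Q (m, n) = P (m, n) + P (m - 1, n) + P (m, n - 1) := by
    intro m n
    have hB' := eqB (m - 1) n
    have hC' := eqC m (n - 1)
    simp only [sub_add_cancel] at hB' hC'
    simp only [hP, hQ]
    linear_combination -eqA m n - hB' - hC'
  have hP0 : P = 0 := eq_zero_of_triangular_eigen hPs (3 - (κ - 1) ^ 2) fun m n => by
    have h1 := hQP (m + 1) n
    have h2 := hQP m (n + 1)
    simp only [add_sub_cancel_right] at h1 h2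
    linear_combination -(κ - 1) * hPQ m n - hQP m n - h1 - h2
  have hQ0 : Q = 0 := eq_zero_of_triangular_eigen hQs (3 - (κ - 1) ^ 2) fun m n => by
    have h1 := hPQ (m - 1) n
    have h2 := hPQ m (n - 1)
    simp only [sub_add_cancel] at h1 h2
    linear_combination -(κ - 1) * hQP m n - hPQ m n - h1 - h2
  have hP' m n : P (m, n) = 0 := congrFun hP0 (m, n)
  have hQ' m n : Q (m, n) = 0 := congrFun hQ0 (m, n)
  refine ⟨funext fun ⟨m, n⟩ => ?_, funext fun ⟨m, n⟩ => ?_, funext fun ⟨m, n⟩ => ?_⟩ <;>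
    refine mul_left_cancel₀ hκ ?_ <;> rw [Pi.zero_apply, mul_zero]
  · linear_combination hP' m n + hQ' m n - hP (m, n) - hQ m n - eqA m n
  · have h := hQ (m + 1) n
    rw [add_sub_cancel_right] at h
    linear_combination hP' m n + hQ' (m + 1) n - hP (m, n) - h - eqB m n
  · have h := hQ m (n + 1)
    rw [add_sub_cancel_right] at h
    linear_combination hP' m n + hQ' m (n + 1) - hP (m, n) - h - eqC m n

theorem summable_sq_comp_kagomePt {g : ℂ → ℝ} (hl2 : Summable fun v : kagomeV => g (v : ℂ) ^ 2)
    {φ : ℤ × ℤ → ℤ × ℤ} (hφ : Function.Injective φ) (hmem : ∀ p, kagomePt (φ p) ∈ kagomeV) :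
    Summable fun p => g (kagomePt (φ p)) ^ 2 := by
  have hinj : Function.Injective fun p => (⟨kagomePt (φ p), hmem p⟩ : kagomeV) :=
    fun _ _ h => hφ (kagomePt_injective (congrArg Subtype.val h))
  exact (hl2.comp_injective hinj :)

theorem l2_eigenvalue_is_three_halves_general
    (g : ℂ → ℝ)
    (hl2 : Summable (fun v : kagomeV => (g (v : ℂ)) ^ 2))
    (hne : ∃ v ∈ kagomeV, g v ≠ 0)
    (μ : ℝ) (heig : ∀ v ∈ kagomeV, kagomeLap g v = μ * g v) :
    μ = 3 / 2 := by
  by_contra hμ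
  have hmem (p : ℤ × ℤ) (hp : p.1 % 2 = 0 ∨ p.2 % 2 = 0) : kagomePt p ∈ kagomeV :=
    (kagomePt_mem_kagomeV_iff p).2 hp
  obtain ⟨hA, hB, hC⟩ := eq_zero_of_kagome_eigen (κ := 4 - 4 * μ)
    (A := fun p => g (kagomePt (2 * p.1, 2 * p.2)))
    (B := fun p => g (kagomePt (2 * p.1 + 1, 2 * p.2)))
    (C := fun p => g (kagomePt (2 * p.1, 2 * p.2 + 1))) (fun h => hμ (by linarith))
    (summable_sq_comp_kagomePt hl2 (fun p q h => by simp only [Prod.ext_iff] at h ⊢; omega)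
      fun p => hmem _ (by omega))
    (summable_sq_comp_kagomePt hl2 (fun p q h => by simp only [Prod.ext_iff] at h ⊢; omega)
      fun p => hmem _ (by omega))
    (summable_sq_comp_kagomePt hl2 (fun p q h => by simp only [Prod.ext_iff] at h ⊢; omega)
      fun p => hmem _ (by omega))
    (fun m n => by
      linear_combination
        -4 * (kagomeLap_kagomePt_even_even g m n).symm.trans (heig _ (hmem _ (by omega))))
    (fun m n => by
      linear_combination
        -4 * (kagomeLap_kagomePt_odd_even g m n).symm.trans (heig _ (hmem _ (by omega))))
    (fun m n => by
      linear_combination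
        -4 * (kagomeLap_kagomePt_even_odd g m n).symm.trans (heig _ (hmem _ (by omega))))
  obtain ⟨v, hv, hgv⟩ := hne
  obtain ⟨p, rfl | rfl | rfl⟩ := mem_kagomeV_iff.1 hv
  exacts [hgv (congrFun hA p), hgv (congrFun hB p), hgv (congrFun hC p)]

/-- If `g ∈ ℓ²(V)` is a nonzero eigenfunction of the combinatorial Laplacian
of the Kagome lattice, `Δ_comb g = μ g`, then `μ = 3/2`. -/
theorem l2_eigenvalue_is_three_halves
    (g : ℂ → ℝ) (hzero : ∀ v ∉ kagomeV, g v = 0)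
    (hl2 : Summable (fun v : kagomeV => (g (v : ℂ)) ^ 2))
    (hne : ∃ v ∈ kagomeV, g v ≠ 0)
    (μ : ℝ) (heig : ∀ v ∈ kagomeV, kagomeLap g v = μ * g v) :
    μ = 3 / 2 :=
  l2_eigenvalue_is_three_halves_general g hl2 hne μ heig
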